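/- arXiv:2303.07987 — 2 statements merged into one kernel-verified Lean document; each statement's English description precedes it below -/
import Mathlib

section
/- Let s ∈ ℤ₂ⁿ, A ∈ ℤ₂^{n×m} with A = [A₁ | A₂] where A₁ ∈ ℤ₂^{n×n} is invertible, and let e ∈ ℤ₂^m with e = (e₁, e₂), e₁ ∈ ℤ₂ⁿ. Define y = Aᵀs + e (so y₁ = A₁ᵀs + e₁, y₂ = A₂ᵀs + e₂), Ā = -A₁⁻¹·A₂, and ȳᵀ = y₁ᵀ·Ā + y₂ᵀ. Then ȳᵀ = e₁ᵀ·Ā + e₂ᵀ, i.e., the transformed samples (Ā, ȳ) form LPN samples whose secret is the error vector e₁. -/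
open Matrix

namespace Matrix

variable {R n m : Type*} [CommRing R] [Fintype n] [DecidableEq n]

theorem vecMul_inv_mul_vecMul_cancel {A₁ : Matrix n n R} (hA₁ : IsUnit A₁)
    (A₂ : Matrix n m R) (s : n → R) :
    (A₁⁻¹ * A₂).vecMul (A₁.vecMul s) = A₂.vecMul s := by
  rw [vecMul_vecMul, ← Matrix.mul_assoc, mul_nonsing_inv A₁ ((isUnit_iff_isUnit_det A₁).mp hA₁),
    Matrix.one_mul]

def lpnSamples (A : Matrix n m R) (s : n → R) (e : m → R) : m → R :=
  A.vecMul s + e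

theorem lpnSamples_neg_inv_mul {A₁ : Matrix n n R} (hA₁ : IsUnit A₁) (A₂ : Matrix n m R)
    (s e₁ : n → R) (e₂ : m → R) :
    (-(A₁⁻¹ * A₂)).vecMul (lpnSamples A₁ s e₁) + lpnSamples A₂ s e₂ =
      lpnSamples (-(A₁⁻¹ * A₂)) e₁ e₂ := by
  simp only [lpnSamples]
  rw [add_vecMul, vecMul_neg, vecMul_neg, vecMul_inv_mul_vecMul_cancel hA₁]
  abel

end Matrix

/-- LPN secret-to-error reduction: if `y₁ᵗ = sᵗA₁ + e₁ᵗ` and `y₂ᵗ = sᵗA₂ + e₂ᵗ`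
with `A₁` invertible, and `Ā = -A₁⁻¹ A₂`, `ȳᵗ = y₁ᵗ Ā + y₂ᵗ`, then
`ȳᵗ = e₁ᵗ Ā + e₂ᵗ`: the new samples have the error `e₁` as secret. -/
theorem lpn_sparse_secret_reduction (n m : ℕ)
    (s : Fin n → ZMod 2) (A₁ : Matrix (Fin n) (Fin n) (ZMod 2))
    (A₂ : Matrix (Fin n) (Fin m) (ZMod 2))
    (e₁ : Fin n → ZMod 2) (e₂ : Fin m → ZMod 2)
    (hA₁ : IsUnit A₁)
    (y₁ : Fin n → ZMod 2) (y₂ : Fin m → ZMod 2)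
    (hy₁ : y₁ = A₁.vecMul s + e₁) (hy₂ : y₂ = A₂.vecMul s + e₂)
    (Abar : Matrix (Fin n) (Fin m) (ZMod 2)) (hAbar : Abar = -(A₁⁻¹ * A₂))
    (ybar : Fin m → ZMod 2) (hybar : ybar = Abar.vecMul y₁ + y₂) :
    ybar = Abar.vecMul e₁ + e₂ := by
  subst hy₁ hy₂ hAbar hybar
  exact lpnSamples_neg_inv_mul hA₁ A₂ s e₁ e₂
end

section
/- Fix k ∈ ℕ. Define coefficients w₁ = 1 and recursively wᵢ = (i mod 2) − Σ_{j=1}^{i−1} wⱼ(i − j + 1) for 2 ≤ i ≤ k. Then for every integer t with 0 ≤ t ≤ k, Σ_{i=1}^{k} wᵢ · max(t − i + 1, 0) = t mod 2. -/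
/-! At `t ≥ 2` the identity is the recursion for `w t` itself: the ReLUs with `i > t` vanish, the
one with `i = t` contributes `w t`, and those with `i < t` contribute `w i * (t - i + 1)`. -/

open Finset

section

variable {R : Type*}

theorem max_natCast_sub_zero [Ring R] [LinearOrder R] [IsStrictOrderedRing R] (m n : ℕ) :
    max ((m : R) - n) 0 = ((m - n : ℕ) : R) := by
  rcases le_total n m with h | h
  · rw [Nat.cast_sub h, max_eq_left (sub_nonneg.mpr (Nat.cast_le.mpr h))]
  · rw [Nat.sub_eq_zero_of_le h, Nat.cast_zero, max_eq_right (sub_nonpos.mpr (Nat.cast_le.mpr h))]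

theorem sum_Icc_mul_relu_eq [Ring R] [LinearOrder R] [IsStrictOrderedRing R]
    (w : ℕ → R) {t k : ℕ} (htk : t ≤ k) :
    ∑ i ∈ Icc 1 k, w i * max ((t : R) - i + 1) 0 = ∑ i ∈ Icc 1 t, w i * ((t + 1 - i : ℕ) : R) := by
  have relu_eq (i : ℕ) : max ((t : R) - i + 1) 0 = ((t + 1 - i : ℕ) : R) := by
    rw [← max_natCast_sub_zero, Nat.cast_succ, sub_add_eq_add_sub]
  simp only [relu_eq]
  refine (sum_subset (Icc_subset_Icc_right htk) fun i hik hit => ?_).symm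
  rw [Nat.sub_eq_zero_of_le (by simp only [mem_Icc] at hik hit; omega), Nat.cast_zero, mul_zero]

theorem sum_Icc_mul_tsub_eq [Semiring R] (w : ℕ → R) {t : ℕ} (ht : 1 ≤ t) :
    ∑ i ∈ Icc 1 t, w i * ((t + 1 - i : ℕ) : R) =
      w t + ∑ j ∈ Ico 1 t, w j * ((t - j + 1 : ℕ) : R) := by
  rw [← Ico_add_one_right_eq_Icc, sum_Ico_succ_top ht, add_comm, Nat.add_sub_cancel_left,
    Nat.cast_one, mul_one]
  congr 1
  refine sum_congr rfl fun j hj => ?_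
  rw [Nat.sub_add_comm (mem_Ico.mp hj).2.le]

end

/-- The ReLU-parity coefficients `w₁ = 1`, `wᵢ = (i mod 2) − Σ_{j<i} wⱼ(i−j+1)`
satisfy `Σ_{i=1}^k wᵢ · max(t−i+1, 0) = t mod 2` for every `0 ≤ t ≤ k`. -/
theorem relu_coeffs_compute_parity (k : ℕ) (w : ℕ → ℝ) (hw1 : w 1 = 1)
    (hrec : ∀ i, 2 ≤ i → i ≤ k →
      w i = ((i % 2 : ℕ) : ℝ) - ∑ j ∈ Finset.Ico 1 i, w j * ((i - j + 1 : ℕ) : ℝ)) :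
    ∀ t : ℕ, t ≤ k →
      ∑ i ∈ Finset.Icc 1 k, w i * max ((t : ℝ) - (i : ℝ) + 1) 0
        = ((t % 2 : ℕ) : ℝ) := by
  intro t htk
  rw [sum_Icc_mul_relu_eq w htk]
  obtain rfl | ht1 := t.eq_zero_or_pos
  · simp
  rw [sum_Icc_mul_tsub_eq w ht1]
  obtain rfl | ht2 : t = 1 ∨ 2 ≤ t := by omega
  · simp [hw1]
  rw [hrec t ht2 htk]
  ring
end
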